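/- Let (X,d) be a metric space and let φ : X → ℝ be bounded and constant outside some bounded set. Then the c-transform φ^c is real-valued, bounded, Lipschitz, and constant outside some bounded set. -/

import Mathlib

open Filter MeasureTheory Set Topology

/-- The `c`-transform for the cost `c(x,y) = d²(x,y)/2`:
`φᶜ(y) = inf_x ( d²(x,y)/2 - φ(x) )`, with values in `EReal`. -/
noncomputable def cTransform {X : Type*} [MetricSpace X] (φ : X → EReal) (y : X) : EReal :=
  ⨅ x : X, ((dist x y ^ 2 / 2 : ℝ) : EReal) - φ x

/-!
If `|φ| ≤ M`, every term `d(x,y)²/2 - φ x` of the infimum is `≥ -M` and the term `x = y` is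
`≤ M`, so `φᶜ` is real-valued with `|φᶜ| ≤ M`. Points with `d(x,y)²/2 ≥ 2M` never beat `x = y`,
so the cost may be replaced by `min(d(x,y), R)²/2` with `R²/2 ≥ 2M`; these truncated costs are
`R`-Lipschitz in `y`, hence so is their infimum. Far away from `S` the term `x = y` gives `-c`,
points of `S` are too far to do better, and points outside `S` give `d(x,y)²/2 - c ≥ -c`.
-/

open Metric NNReal

theorem exists_le_sq_div_two (a : ℝ) : ∃ r : ℝ≥0, a ≤ r ^ 2 / 2 :=
  ⟨(|a| + 1).toNNReal, by
    rw [Real.coe_toNNReal _ (by positivity)]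
    nlinarith [le_abs_self a, abs_nonneg a]⟩

theorem LipschitzWith.ciInf {X ι : Type*} [PseudoMetricSpace X] {f : ι → X → ℝ} {K : ℝ≥0}
    (hf : ∀ i, LipschitzWith K (f i)) (hbdd : ∀ y, BddBelow (range fun i => f i y)) :
    LipschitzWith K fun y => ⨅ i, f i y := by
  rcases isEmpty_or_nonempty ι with hι | hι
  · simpa only [Real.iInf_of_isEmpty] using (LipschitzWith.const (α := X) (0 : ℝ)).weaken K.2
  refine LipschitzWith.of_le_add_mul K fun a b => ?_
  rw [← sub_le_iff_le_add]
  exact le_ciInf fun i => sub_le_iff_le_add.2 <|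
    (ciInf_le (hbdd a) i).trans ((hf i).le_add_mul a b)

theorem lipschitzWith_min_dist_sq_div_two {X : Type*} [PseudoMetricSpace X] (x : X) (R : ℝ≥0) :
    LipschitzWith R fun y => min (dist x y) R ^ 2 / 2 := by
  refine LipschitzWith.of_le_add_mul R fun a b => ?_
  have hab : min (dist x a) R - min (dist x b) R ≤ dist a b :=
    (abs_sub_le_iff.1 (((LipschitzWith.dist_right x).min_const R).dist_le_mul a b)).1.trans
      (by simp)
  have ha : 0 ≤ min (dist x a) R := le_min dist_nonneg R.2
  have hb : 0 ≤ min (dist x b) R := le_min dist_nonneg R.2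
  have ha' : min (dist x a) R ≤ R := min_le_right _ _
  have hb' : min (dist x b) R ≤ R := min_le_right _ _
  nlinarith [dist_nonneg (x := a) (y := b)]

section RealCTransform

variable {X : Type*} [PseudoMetricSpace X] {φ : X → ℝ} {M : ℝ}

noncomputable def realCTransform (φ : X → ℝ) (y : X) : ℝ :=
  ⨅ x, dist x y ^ 2 / 2 - φ x

theorem bddBelow_range_cost (hφ : ∀ x, φ x ≤ M) (y : X) :
    BddBelow (range fun x => dist x y ^ 2 / 2 - φ x) := by
  refine ⟨-M, ?_⟩
  rintro _ ⟨x, rfl⟩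
  have := hφ x
  dsimp only
  nlinarith [sq_nonneg (dist x y)]

theorem realCTransform_le (hφ : ∀ x, φ x ≤ M) (x y : X) :
    realCTransform φ y ≤ dist x y ^ 2 / 2 - φ x :=
  ciInf_le (bddBelow_range_cost hφ y) x

theorem realCTransform_le_neg_self (hφ : ∀ x, φ x ≤ M) (y : X) : realCTransform φ y ≤ -φ y := by
  simpa using realCTransform_le hφ y y

theorem neg_le_realCTransform (hφ : ∀ x, φ x ≤ M) (y : X) : -M ≤ realCTransform φ y := by
  have : Nonempty X := ⟨y⟩
  refine le_ciInf fun x => ?_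
  have := hφ x
  nlinarith [sq_nonneg (dist x y)]

theorem abs_realCTransform_le (hφ : ∀ x, |φ x| ≤ M) (y : X) : |realCTransform φ y| ≤ M := by
  have hφ' : ∀ x, φ x ≤ M := fun x => (abs_le.1 (hφ x)).2
  exact abs_le.2 ⟨neg_le_realCTransform hφ' y,
    (realCTransform_le_neg_self hφ' y).trans (neg_le.1 (abs_le.1 (hφ y)).1)⟩

theorem bddBelow_range_min_dist_cost (hφ : ∀ x, φ x ≤ M) (R : ℝ≥0) (y : X) :
    BddBelow (range fun x => min (dist x y) R ^ 2 / 2 - φ x) := by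
  refine ⟨-M, ?_⟩
  rintro _ ⟨x, rfl⟩
  have := hφ x
  dsimp only
  nlinarith [sq_nonneg (min (dist x y) R)]

theorem realCTransform_eq_iInf_min_dist (hφ : ∀ x, |φ x| ≤ M) {R : ℝ≥0}
    (hR : 2 * M ≤ R ^ 2 / 2) :
    realCTransform φ = fun y => ⨅ x, min (dist x y) R ^ 2 / 2 - φ x := by
  have hφ' : ∀ x, φ x ≤ M := fun x => (abs_le.1 (hφ x)).2
  funext y
  have : Nonempty X := ⟨y⟩
  refine le_antisymm (le_ciInf fun x => ?_)
    (ciInf_mono (bddBelow_range_min_dist_cost hφ' R y) fun x => ?_)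
  · rcases le_total (dist x y) R with hxy | hxy
    · simpa only [min_eq_left hxy] using realCTransform_le hφ' x y
    · rw [min_eq_right hxy]
      have := realCTransform_le_neg_self hφ' y
      have := abs_le.1 (hφ y)
      linarith [hφ' x]
  · gcongr
    exact min_le_left _ _

theorem lipschitzWith_realCTransform (hφ : ∀ x, |φ x| ≤ M) {R : ℝ≥0} (hR : 2 * M ≤ R ^ 2 / 2) :
    LipschitzWith R (realCTransform φ) := by
  rw [realCTransform_eq_iInf_min_dist hφ hR]
  refine LipschitzWith.ciInf (fun x => ?_)
    (bddBelow_range_min_dist_cost (fun x => (abs_le.1 (hφ x)).2) R)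
  simpa using (lipschitzWith_min_dist_sq_div_two x R).sub (LipschitzWith.const (φ x))

theorem realCTransform_eq_neg_of_notMem_cthickening (hφ : ∀ x, φ x ≤ M) {c : ℝ} {S : Set X}
    (hc : ∀ x ∉ S, φ x = c) {ρ : ℝ≥0} (hρ : M - c ≤ ρ ^ 2 / 2) {y : X}
    (hy : y ∉ cthickening ρ S) : realCTransform φ y = -c := by
  have : Nonempty X := ⟨y⟩
  refine le_antisymm ?_ (le_ciInf fun x => ?_)
  · simpa [hc y fun h => hy (self_subset_cthickening S h)] using realCTransform_le_neg_self hφ y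
  · by_cases hx : x ∈ S
    · have hρxy : ρ < dist x y := by
        by_contra! h
        exact hy (mem_cthickening_of_dist_le y x ρ S hx (by rwa [dist_comm]))
      have := hφ x
      nlinarith
    · rw [hc x hx]
      nlinarith [sq_nonneg (dist x y)]

end RealCTransform

theorem cTransform_coe_eq_realCTransform {X : Type*} [MetricSpace X] {φ : X → ℝ} {M : ℝ}
    (hφ : ∀ x, φ x ≤ M) (y : X) :
    cTransform (fun x => (φ x : EReal)) y = realCTransform φ y := by
  have : Nonempty X := ⟨y⟩
  rw [realCTransform, EReal.coe_strictMono.monotone.map_ciInf_of_continuousAt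
    continuous_coe_real_ereal.continuousAt (bddBelow_range_cost hφ y)]
  simp only [cTransform, EReal.coe_sub]

/-- If `φ : X → ℝ` is bounded and constant outside a bounded set, then its
`c`-transform `φᶜ` is real-valued, bounded, Lipschitz, and constant outside a bounded set. -/
theorem stmt9 {X : Type*} [MetricSpace X] (φ : X → ℝ)
    (hb : ∃ M : ℝ, ∀ x, |φ x| ≤ M)
    (c : ℝ) (S : Set X) (hS : Bornology.IsBounded S) (hc : ∀ x ∉ S, φ x = c) :
    ∃ g : X → ℝ,
      (∀ y, cTransform (fun x => ((φ x : ℝ) : EReal)) y = (g y : EReal)) ∧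
      (∃ M : ℝ, ∀ y, |g y| ≤ M) ∧
      (∃ K : NNReal, LipschitzWith K g) ∧
      (∃ (c' : ℝ) (S' : Set X), Bornology.IsBounded S' ∧ ∀ y ∉ S', g y = c') := by
  obtain ⟨M, hM⟩ := hb
  have hφ : ∀ x, φ x ≤ M := fun x => (abs_le.1 (hM x)).2
  obtain ⟨R, hR⟩ := exists_le_sq_div_two (2 * M)
  obtain ⟨ρ, hρ⟩ := exists_le_sq_div_two (M - c)
  exact ⟨realCTransform φ, cTransform_coe_eq_realCTransform hφ, ⟨M, abs_realCTransform_le hM⟩,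
    ⟨R, lipschitzWith_realCTransform hM hR⟩, -c, cthickening ρ S, hS.cthickening,
    fun y hy => realCTransform_eq_neg_of_notMem_cthickening hφ hc hρ hy⟩
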